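/- arXiv:2209.00822 — 4 statements merged into one kernel-verified Lean document; each statement's English description precedes it below -/
import Mathlib

section
/- Let N ∈ ℕ, 1 ≤ n⁺ ≤ N, α ∈ (0,1), v > 0, let W⁺ be a probability weighting function, let h⁺ be the gain decision weights, let J be the transitional index, and define Y = v·(∑_{j'=1}^{J} h⁺_{j'})^{α/(1−α)} / [ (∑_{j'=1}^{J} h⁺_{j'})^{1/(1−α)} + J^{α/(1−α)} · ∑_{j'=J+1}^{n⁺} (h⁺_{j'})^{1/(1−α)} ] and y*_j = Y for 1 ≤ j ≤ J and y*_j = ( J·h⁺_j / ∑_{j'=1}^{J} h⁺_{j'} )^{α/(1−α)} · Y for J+1 ≤ j ≤ n⁺. Then y* is feasible for the gain subproblem and is its unique global minimizer: every feasible y with y ≠ y* satisfies ∑_{j=1}^{n⁺} y_j^{1/α} > ∑_{j=1}^{n⁺} (y*_j)^{1/α}. -/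
open Finset

/-- An inverse S-shaped function on `[0,1]`: strictly increasing, continuously
differentiable, with a derivative strictly decreasing then strictly increasing. -/
def InverseSShaped (W : ℝ → ℝ) : Prop :=
  StrictMonoOn W (Set.Icc (0 : ℝ) 1) ∧
  ContDiffOn ℝ 1 W (Set.Icc (0 : ℝ) 1) ∧
  ∃ x₀ ∈ Set.Icc (0 : ℝ) 1,
    StrictAntiOn (deriv W) (Set.Icc (0 : ℝ) x₀) ∧ StrictMonoOn (deriv W) (Set.Icc x₀ 1)

/-- A probability weighting function: inverse S-shaped with `W 0 = 0` and `W 1 = 1`. -/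
def IsPWF (W : ℝ → ℝ) : Prop :=
  InverseSShaped W ∧ W 0 = 0 ∧ W 1 = 1

/-- Gain decision weights: `h⁺_j = W⁺((n−j+1)/N) − W⁺((n−j)/N)` for `j = 1,…,n`. -/
noncomputable def gainW (W : ℝ → ℝ) (N n j : ℕ) : ℝ :=
  W (((n : ℝ) - j + 1) / N) - W (((n : ℝ) - j) / N)

/-- The transitional index
`J = min{ j ∈ {1,…,n} : j = n ∨ j·h⁺_{j+1} ≥ ∑_{j'≤j} h⁺_{j'} }`. -/
noncomputable def transIdx (W : ℝ → ℝ) (N n : ℕ) : ℕ :=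
  sInf {j : ℕ | 1 ≤ j ∧ j ≤ n ∧
    (j = n ∨ ∑ j' ∈ Finset.Icc 1 j, gainW W N n j' ≤ (j : ℝ) * gainW W N n (j + 1))}

/-- Feasibility for the gain subproblem: `0 ≤ y_1 ≤ … ≤ y_n` and `∑ h⁺_j y_j = v`. -/
def GainFeasible (W : ℝ → ℝ) (N n : ℕ) (v : ℝ) (y : ℕ → ℝ) : Prop :=
  0 ≤ y 1 ∧ (∀ j ∈ Finset.Icc 1 (n - 1), y j ≤ y (j + 1)) ∧
  ∑ j ∈ Finset.Icc 1 n, gainW W N n j * y j = v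

/-- The constant `Y` of the candidate optimal solution of the gain subproblem. -/
noncomputable def gainY (W : ℝ → ℝ) (N n : ℕ) (α v : ℝ) : ℝ :=
  v * (∑ j' ∈ Finset.Icc 1 (transIdx W N n), gainW W N n j') ^ (α / (1 - α)) /
    ((∑ j' ∈ Finset.Icc 1 (transIdx W N n), gainW W N n j') ^ ((1 : ℝ) / (1 - α)) +
      (transIdx W N n : ℝ) ^ (α / (1 - α)) *
        ∑ j' ∈ Finset.Icc (transIdx W N n + 1) n, gainW W N n j' ^ ((1 : ℝ) / (1 - α)))

/-- The candidate optimal solution `y*` of the gain subproblem. -/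
noncomputable def gainOpt (W : ℝ → ℝ) (N n : ℕ) (α v : ℝ) : ℕ → ℝ := fun j =>
  if j ≤ transIdx W N n then gainY W N n α v
  else ((transIdx W N n : ℝ) * gainW W N n j /
      ∑ j' ∈ Finset.Icc 1 (transIdx W N n), gainW W N n j') ^ (α / (1 - α)) * gainY W N n α v


/-!
The objective `∑ yⱼ ^ (1/α)` is strictly convex, so `y*` is its unique minimiser on the feasible
set as soon as its gradient at `y*` pairs nonnegatively with `y - y*` for every feasible `y`. Up to
a positive factor that gradient is `λⱼ = 1` for `j ≤ J` and `λⱼ = J hⱼ / S_J` beyond, where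
`S_k = h₁ + ⋯ + h_k`, and whenever `∑ hⱼ yⱼ = v`,
`∑ λⱼ yⱼ = (J / S_J) v + (∑_{j ≤ J} yⱼ - (J / S_J) ∑_{j ≤ J} hⱼ yⱼ)`.
The bracket vanishes at `y*`, and it is nonnegative for nondecreasing `y` by Chebyshev's sum
inequality, because the minimality of `J` makes the prefix averages `S_k / k`, `k ≤ J`, decrease.

Feasibility of `y*` needs `hⱼ ≤ hⱼ₊₁` beyond `J`. By the mean value theorem, equally spaced
increments of an inverse S-shaped `W` strictly increase once they stop decreasing; so a decrease
beyond `J` would make `h₁, …, h_{J+1}` strictly decreasing and give `S_J > J h_{J+1}`, against the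
choice of `J`.
-/

lemma lt_of_le_of_strictAntiOn_of_strictMonoOn {g : ℝ → ℝ} {a b x₀ : ℝ}
    (hanti : StrictAntiOn g (Set.Icc a x₀)) (hmono : StrictMonoOn g (Set.Icc x₀ b))
    {x y z : ℝ} (hax : a ≤ x) (hxy : x < y) (hyz : y < z) (hzb : z ≤ b) (h : g z ≤ g y) :
    g y < g x := by
  by_cases hy : x₀ ≤ y
  · exact absurd h (not_le.2 (hmono ⟨hy, hyz.le.trans hzb⟩ ⟨hy.trans hyz.le, hzb⟩ hyz))
  · exact hanti ⟨hax, (hxy.trans (not_le.1 hy)).le⟩ ⟨hax.trans hxy.le, (not_le.1 hy).le⟩ hxy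

lemma InverseSShaped.sub_lt_sub_of_sub_le_sub {W : ℝ → ℝ} (hW : InverseSShaped W)
    {a b c d : ℝ} (ha : 0 ≤ a) (hab : a < b) (hbc : c - b = b - a) (hcd : d - c = b - a)
    (hd : d ≤ 1) (h : W d - W c ≤ W c - W b) : W c - W b < W b - W a := by
  obtain ⟨-, hC, x₀, -, hanti, hmono⟩ := hW
  have hδ : 0 < b - a := sub_pos.2 hab
  have mvt : ∀ x y, 0 ≤ x → y - x = b - a → y ≤ 1 →
      ∃ ξ ∈ Set.Ioo x y, W y - W x = deriv W ξ * (b - a) := by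
    intro x y hx hxy hy
    have hsub : Set.Icc x y ⊆ Set.Icc 0 1 := Set.Icc_subset_Icc hx hy
    obtain ⟨ξ, hξ, hξW⟩ := exists_deriv_eq_slope W (by linarith : x < y)
      (hC.continuousOn.mono hsub)
      ((hC.differentiableOn one_ne_zero).mono (Set.Ioo_subset_Icc_self.trans hsub))
    exact ⟨ξ, hξ, by rw [hξW, hxy, div_mul_cancel₀ _ hδ.ne']⟩
  obtain ⟨ξ₁, hξ₁, h₁⟩ := mvt a b ha rfl (by linarith)
  obtain ⟨ξ₂, hξ₂, h₂⟩ := mvt b c (by linarith) hbc (by linarith)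
  obtain ⟨ξ₃, hξ₃, h₃⟩ := mvt c d (by linarith) hcd hd
  rw [h₂, h₃, mul_le_mul_iff_of_pos_right hδ] at h
  rw [h₁, h₂]
  exact mul_lt_mul_of_pos_right (lt_of_le_of_strictAntiOn_of_strictMonoOn hanti hmono
    (ha.trans hξ₁.1.le) (hξ₁.2.trans hξ₂.1) (hξ₂.2.trans hξ₃.1) (by linarith [hξ₃.2]) h) hδ

lemma rpow_add_mul_rpow_sub_one_mul_sub_lt_rpow {t x p : ℝ} (ht : 0 < t) (hx : 0 ≤ x)
    (hp : 1 < p) (hxt : x ≠ t) : t ^ p + p * t ^ (p - 1) * (x - t) < x ^ p := by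
  have hbern := one_add_mul_self_lt_rpow_one_add (s := x / t - 1)
    (by linarith [div_nonneg hx ht.le]) (by rwa [sub_ne_zero, ne_eq, div_eq_one_iff_eq ht.ne']) hp
  rw [add_sub_cancel, Real.div_rpow hx ht.le, lt_div_iff₀ (Real.rpow_pos_of_pos ht p)] at hbern
  calc t ^ p + p * t ^ (p - 1) * (x - t) = (1 + p * (x / t - 1)) * t ^ p := by
        rw [Real.rpow_sub ht, Real.rpow_one]; field_simp
    _ < x ^ p := hbern

lemma sum_rpow_lt_of_gradient_nonneg {ι : Type*} {s : Finset ι} {p : ℝ} (hp : 1 < p)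
    {t y : ι → ℝ} (ht : ∀ i ∈ s, 0 < t i) (hy : ∀ i ∈ s, 0 ≤ y i)
    (hgrad : 0 ≤ ∑ i ∈ s, t i ^ (p - 1) * (y i - t i)) (hne : ∃ i ∈ s, y i ≠ t i) :
    ∑ i ∈ s, t i ^ p < ∑ i ∈ s, y i ^ p := by
  have htangent : ∑ i ∈ s, (t i ^ p + p * t i ^ (p - 1) * (y i - t i)) < ∑ i ∈ s, y i ^ p := by
    obtain ⟨i, hi, hyi⟩ := hne
    refine sum_lt_sum (fun j hj => ?_) ⟨i, hi,
      rpow_add_mul_rpow_sub_one_mul_sub_lt_rpow (ht i hi) (hy i hi) hp hyi⟩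
    rcases eq_or_ne (y j) (t j) with hyj | hyj
    · simp [hyj]
    · exact (rpow_add_mul_rpow_sub_one_mul_sub_lt_rpow (ht j hj) (hy j hj) hp hyj).le
  have hlin : ∑ i ∈ s, p * t i ^ (p - 1) * (y i - t i) =
      p * ∑ i ∈ s, t i ^ (p - 1) * (y i - t i) := by
    simp_rw [mul_sum, mul_assoc]
  rw [sum_add_distrib, hlin] at htangent
  linarith [mul_nonneg (zero_le_one.trans hp.le) hgrad]

lemma sum_Icc_one_eq_add (f : ℕ → ℝ) {J n : ℕ} (hJn : J ≤ n) :
    ∑ j ∈ Icc 1 n, f j = ∑ j ∈ Icc 1 J, f j + ∑ j ∈ Icc (J + 1) n, f j := by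
  simpa only [← Icc_add_one_left_eq_Ioc, zero_add] using
    (sum_Ioc_consecutive f (Nat.zero_le J) hJn).symm

/-- Abel summation against a monotone sequence. -/
lemma sum_Icc_mul_le_sum_mul_of_monotoneOn (μ y : ℕ → ℝ) (m : ℕ)
    (hμ : ∀ k < m, 0 ≤ ∑ j ∈ Icc 1 k, μ j) (hy : MonotoneOn y (Set.Icc 1 m)) :
    ∑ j ∈ Icc 1 m, μ j * y j ≤ (∑ j ∈ Icc 1 m, μ j) * y m := by
  induction m with
  | zero => simp
  | succ m ih =>
    rw [sum_Icc_succ_top (by omega), sum_Icc_succ_top (by omega), add_mul]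
    have ih' := ih (fun k hk => hμ k (by omega))
      (hy.mono (Set.Icc_subset_Icc le_rfl (by omega)))
    have hstep : (∑ j ∈ Icc 1 m, μ j) * y m ≤ (∑ j ∈ Icc 1 m, μ j) * y (m + 1) := by
      rcases Nat.eq_zero_or_pos m with rfl | hm
      · simp
      · exact mul_le_mul_of_nonneg_left (hy ⟨hm, by omega⟩ ⟨by omega, le_rfl⟩ (by omega))
          (hμ m (by omega))
    linarith

lemma mul_sum_Icc_le_mul_sum_Icc_of_mul_le_sum (a : ℕ → ℝ) {m k : ℕ}
    (ha : ∀ i, 1 ≤ i → i < m → (i : ℝ) * a (i + 1) ≤ ∑ j ∈ Icc 1 i, a j)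
    (hk : 1 ≤ k) (hkm : k ≤ m) :
    (k : ℝ) * ∑ j ∈ Icc 1 m, a j ≤ m * ∑ j ∈ Icc 1 k, a j := by
  induction m, hkm using Nat.le_induction with
  | base => rw [mul_comm]
  | succ m hkm ih =>
    have ih := ih (fun i hi him => ha i hi (by omega))
    have ham := ha m (by omega) (by omega)
    have hm : (0 : ℝ) < m := by exact_mod_cast (by omega : 0 < m)
    rw [sum_Icc_succ_top (by omega)]
    push_cast
    refine le_of_mul_le_mul_left ?_ hm
    nlinarith [mul_le_mul_of_nonneg_left ham (Nat.cast_nonneg k : (0 : ℝ) ≤ k)]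

/-- Chebyshev's sum inequality, for weights with decreasing prefix averages. -/
lemma mul_sum_mul_le_sum_mul_sum (a y : ℕ → ℝ) (m : ℕ)
    (ha : ∀ k, 1 ≤ k → k ≤ m → (k : ℝ) * ∑ j ∈ Icc 1 m, a j ≤ m * ∑ j ∈ Icc 1 k, a j)
    (hy : MonotoneOn y (Set.Icc 1 m)) :
    (m : ℝ) * ∑ j ∈ Icc 1 m, a j * y j ≤ (∑ j ∈ Icc 1 m, a j) * ∑ j ∈ Icc 1 m, y j := by
  set A := ∑ j ∈ Icc 1 m, a j
  have hpartial : ∀ k, ∑ j ∈ Icc 1 k, (m * a j - A) = m * ∑ j ∈ Icc 1 k, a j - k * A := by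
    intro k
    simp [sum_sub_distrib, mul_sum]
  have habel := sum_Icc_mul_le_sum_mul_of_monotoneOn (fun j => m * a j - A) y m
    (fun k hk => by
      rcases Nat.eq_zero_or_pos k with rfl | hk1
      · simp
      · rw [hpartial]; linarith [ha k hk1 hk.le]) hy
  rw [hpartial] at habel
  simp only [sub_mul, sum_sub_distrib, mul_assoc, ← mul_sum] at habel
  linarith

lemma le_succ_of_sum_Icc_le_mul (h : ℕ → ℝ) {n J : ℕ}
    (hshape : ∀ k, 1 ≤ k → k + 2 ≤ n → h k ≤ h (k + 1) → h (k + 1) < h (k + 2))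
    (hJ : 1 ≤ J) (hJh : ∑ j ∈ Icc 1 J, h j ≤ J * h (J + 1))
    {j : ℕ} (hj : J + 1 ≤ j) (hjn : j + 1 ≤ n) : h j ≤ h (j + 1) := by
  by_contra! hdrop
  have hdesc : ∀ d k, 1 ≤ k → k + d = j → h (k + 1) < h k := by
    intro d
    induction d with
    | zero => intro k _ hk; subst hk; exact hdrop
    | succ d ih =>
      intro k hk hkd
      by_contra! hle
      exact (ih (k + 1) (by omega) (by omega)).not_gt (hshape k hk (by omega) hle)
  have hanti : StrictAntiOn h (Set.Icc 1 (j + 1)) :=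
    strictAntiOn_of_succ_lt Set.ordConnected_Icc fun k _ hk hk1 => by
      simp only [Order.succ_eq_add_one, Set.mem_Icc] at hk hk1 ⊢
      exact hdesc (j - k) k hk.1 (by omega)
  have hlt : ∑ _j ∈ Icc 1 J, h (J + 1) < ∑ j ∈ Icc 1 J, h j :=
    sum_lt_sum_of_nonempty ⟨1, by simp [hJ]⟩ fun i hi => by
      simp only [mem_Icc] at hi
      exact hanti ⟨hi.1, by omega⟩ ⟨by omega, by omega⟩ (by omega)
  simp only [sum_const, Nat.card_Icc, add_tsub_cancel_right, nsmul_eq_mul] at hlt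
  linarith

section GainWeights

variable {W : ℝ → ℝ} {N n : ℕ}

lemma gainW_pos (hW : IsPWF W) (hnN : n ≤ N) {j : ℕ} (hj : 1 ≤ j) (hjn : j ≤ n) :
    0 < gainW W N n j := by
  have hN : (0 : ℝ) < N := by exact_mod_cast (by omega : 0 < N)
  have hj' : (1 : ℝ) ≤ j := by exact_mod_cast hj
  have hjn' : (j : ℝ) ≤ n := by exact_mod_cast hjn
  have hnN' : (n : ℝ) ≤ N := by exact_mod_cast hnN
  refine sub_pos.2 (hW.1.1 ⟨by positivity, ?_⟩ ⟨by positivity, ?_⟩ ?_)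
  · rw [div_le_one hN]; linarith
  · rw [div_le_one hN]; linarith
  · gcongr; linarith

lemma gainW_succ_lt_gainW_succ_succ (hW : IsPWF W) (hnN : n ≤ N) {j : ℕ} (hj : 1 ≤ j)
    (hjn : j + 2 ≤ n) (h : gainW W N n j ≤ gainW W N n (j + 1)) :
    gainW W N n (j + 1) < gainW W N n (j + 2) := by
  have hN : (0 : ℝ) < N := by exact_mod_cast (by omega : 0 < N)
  have hj' : (1 : ℝ) ≤ j := by exact_mod_cast hj
  have hjn' : (j : ℝ) + 2 ≤ n := by exact_mod_cast hjn
  have hnN' : (n : ℝ) ≤ N := by exact_mod_cast hnN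
  have e₁ : (n : ℝ) - (j + 1) + 1 = n - j := by ring
  have e₂ : (n : ℝ) - (j + 2) + 1 = n - (j + 1) := by ring
  simp only [gainW] at h ⊢
  push_cast at h ⊢
  rw [e₁] at h ⊢
  rw [e₂]
  refine hW.1.sub_lt_sub_of_sub_le_sub (by positivity) (by gcongr; linarith) ?_ ?_ ?_ h
  · ring
  · ring
  · rw [div_le_one hN]; linarith

lemma transIdx_spec (hn : 1 ≤ n) :
    1 ≤ transIdx W N n ∧ transIdx W N n ≤ n ∧ (transIdx W N n = n ∨
      ∑ j ∈ Icc 1 (transIdx W N n), gainW W N n j ≤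
        transIdx W N n * gainW W N n (transIdx W N n + 1)) :=
  Nat.sInf_mem (s := {j : ℕ | 1 ≤ j ∧ j ≤ n ∧ _}) ⟨n, hn, le_rfl, Or.inl rfl⟩

lemma mul_gainW_succ_le_sum_of_lt_transIdx (hn : 1 ≤ n) {k : ℕ} (hk : 1 ≤ k)
    (hkJ : k < transIdx W N n) : (k : ℝ) * gainW W N n (k + 1) ≤ ∑ j ∈ Icc 1 k, gainW W N n j := by
  have hmin := Nat.notMem_of_lt_sInf hkJ
  simp only [Set.mem_ofPred_eq, not_and, not_or, not_le] at hmin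
  exact (hmin hk (hkJ.le.trans (transIdx_spec hn).2.1)).2.le

lemma gainW_le_gainW_succ_of_transIdx_lt (hW : IsPWF W) (hn : 1 ≤ n) (hnN : n ≤ N) {j : ℕ}
    (hj : transIdx W N n < j) (hjn : j + 1 ≤ n) : gainW W N n j ≤ gainW W N n (j + 1) := by
  obtain ⟨hJ, -, hJn | hJh⟩ := transIdx_spec (W := W) (N := N) hn
  · omega
  · exact le_succ_of_sum_Icc_le_mul (gainW W N n)
      (fun k hk hkn => gainW_succ_lt_gainW_succ_succ hW hnN hk hkn) hJ hJh hj hjn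

lemma sum_gainW_transIdx_pos (hW : IsPWF W) (hn : 1 ≤ n) (hnN : n ≤ N) :
    0 < ∑ j ∈ Icc 1 (transIdx W N n), gainW W N n j := by
  obtain ⟨hJ, hJn, -⟩ := transIdx_spec (W := W) (N := N) hn
  exact sum_pos (fun j hj => gainW_pos hW hnN (mem_Icc.1 hj).1 ((mem_Icc.1 hj).2.trans hJn))
    ⟨1, mem_Icc.2 ⟨le_rfl, hJ⟩⟩

end GainWeights

lemma GainFeasible.monotoneOn {W : ℝ → ℝ} {N n : ℕ} {v : ℝ} {y : ℕ → ℝ}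
    (hy : GainFeasible W N n v y) : MonotoneOn y (Set.Icc 1 n) :=
  monotoneOn_of_le_succ Set.ordConnected_Icc fun k _ hk hk1 => by
    simp only [Order.succ_eq_add_one, Set.mem_Icc] at hk hk1 ⊢
    exact hy.2.1 k (mem_Icc.2 ⟨hk.1, by omega⟩)

lemma GainFeasible.nonneg {W : ℝ → ℝ} {N n : ℕ} {v : ℝ} {y : ℕ → ℝ}
    (hy : GainFeasible W N n v y) {j : ℕ} (hj : 1 ≤ j) (hjn : j ≤ n) : 0 ≤ y j :=
  hy.1.trans (hy.monotoneOn ⟨le_rfl, hj.trans hjn⟩ ⟨hj, hjn⟩ hj)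

/-- The gradient of `∑ j, y j ^ (1 / α)` at `gainOpt`, up to a positive factor
(`gainOpt_rpow_sub_one`); it is `λ` in the proof sketch above. -/
noncomputable def gainRatio (W : ℝ → ℝ) (N n j : ℕ) : ℝ :=
  if j ≤ transIdx W N n then 1
  else transIdx W N n * gainW W N n j / ∑ j' ∈ Icc 1 (transIdx W N n), gainW W N n j'

section GainOpt

variable {W : ℝ → ℝ} {N n : ℕ} {α v : ℝ}

lemma gainOpt_eq_gainRatio_rpow_mul (j : ℕ) :
    gainOpt W N n α v j = gainRatio W N n j ^ (α / (1 - α)) * gainY W N n α v := by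
  unfold gainOpt gainRatio
  split_ifs <;> simp

lemma gainOpt_of_le_transIdx {j : ℕ} (hj : j ≤ transIdx W N n) :
    gainOpt W N n α v j = gainY W N n α v :=
  if_pos hj

lemma gainRatio_pos (hW : IsPWF W) (hn : 1 ≤ n) (hnN : n ≤ N) {j : ℕ} (hj : 1 ≤ j)
    (hjn : j ≤ n) : 0 < gainRatio W N n j := by
  have hJ : (1 : ℝ) ≤ transIdx W N n := by exact_mod_cast (transIdx_spec hn).1
  unfold gainRatio
  split_ifs
  · exact one_pos
  · have := gainW_pos hW hnN hj hjn
    have := sum_gainW_transIdx_pos hW hn hnN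
    positivity

lemma gainRatio_le_gainRatio_succ (hW : IsPWF W) (hn : 1 ≤ n) (hnN : n ≤ N) {j : ℕ}
    (hjn : j + 1 ≤ n) : gainRatio W N n j ≤ gainRatio W N n (j + 1) := by
  have hS := sum_gainW_transIdx_pos hW hn hnN
  unfold gainRatio
  split_ifs with h₁ h₂ h₂
  · exact le_rfl
  · obtain ⟨-, -, hJn | hJh⟩ := transIdx_spec (W := W) (N := N) hn
    · omega
    · rwa [le_div_iff₀ hS, one_mul, show j = transIdx W N n by omega]
  · omega
  · gcongr
    exact gainW_le_gainW_succ_of_transIdx_lt hW hn hnN (by omega) hjn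

lemma gainY_pos (hW : IsPWF W) (hn : 1 ≤ n) (hnN : n ≤ N) (hv : 0 < v) :
    0 < gainY W N n α v := by
  have hS := sum_gainW_transIdx_pos hW hn hnN
  have hT : 0 ≤ ∑ j ∈ Icc (transIdx W N n + 1) n, gainW W N n j ^ ((1 : ℝ) / (1 - α)) :=
    sum_nonneg fun j hj =>
      Real.rpow_nonneg (gainW_pos hW hnN (by grind) (mem_Icc.1 hj).2).le _
  unfold gainY
  positivity

lemma sum_gainW_mul_gainOpt (hW : IsPWF W) (hn : 1 ≤ n) (hnN : n ≤ N) (hα : α ≠ 1) :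
    ∑ j ∈ Icc 1 n, gainW W N n j * gainOpt W N n α v j = v := by
  obtain ⟨-, hJn, -⟩ := transIdx_spec (W := W) (N := N) hn
  have hS := sum_gainW_transIdx_pos hW hn hnN
  have hq : (1 : ℝ) / (1 - α) = 1 + α / (1 - α) := by
    field_simp [sub_ne_zero.2 hα.symm]; ring
  set J := transIdx W N n
  set S := ∑ j ∈ Icc 1 J, gainW W N n j
  set T := ∑ j ∈ Icc (J + 1) n, gainW W N n j ^ ((1 : ℝ) / (1 - α))
  set e := α / (1 - α)
  have hhead : ∑ j ∈ Icc 1 J, gainW W N n j * gainOpt W N n α v j = S * gainY W N n α v := by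
    rw [sum_mul]
    exact sum_congr rfl fun j hj => by rw [gainOpt_of_le_transIdx (mem_Icc.1 hj).2]
  have htail : ∑ j ∈ Icc (J + 1) n, gainW W N n j * gainOpt W N n α v j =
      J ^ e / S ^ e * gainY W N n α v * T := by
    rw [mul_sum]
    refine sum_congr rfl fun j hj => ?_
    have hj := mem_Icc.1 hj
    have hh := gainW_pos hW hnN (by omega) hj.2
    rw [gainOpt_eq_gainRatio_rpow_mul, gainRatio, if_neg (by omega), hq, Real.rpow_add hh,
      Real.rpow_one, mul_div_right_comm, Real.mul_rpow (by positivity) hh.le,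
      Real.div_rpow (Nat.cast_nonneg J) hS.le]
    ring
  have hY : gainY W N n α v = v * S ^ e / (S ^ ((1 : ℝ) / (1 - α)) + J ^ e * T) := rfl
  have hT : 0 ≤ T := sum_nonneg fun j hj =>
    Real.rpow_nonneg (gainW_pos hW hnN (by grind) (mem_Icc.1 hj).2).le _
  rw [sum_Icc_one_eq_add _ hJn, hhead, htail, hY, hq, Real.rpow_add hS, Real.rpow_one]
  field_simp

lemma gainOpt_pos (hW : IsPWF W) (hn : 1 ≤ n) (hnN : n ≤ N) (hv : 0 < v) {j : ℕ} (hj : 1 ≤ j)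
    (hjn : j ≤ n) : 0 < gainOpt W N n α v j := by
  rw [gainOpt_eq_gainRatio_rpow_mul]
  exact mul_pos (Real.rpow_pos_of_pos (gainRatio_pos hW hn hnN hj hjn) _) (gainY_pos hW hn hnN hv)

lemma gainFeasible_gainOpt (hW : IsPWF W) (hn : 1 ≤ n) (hnN : n ≤ N) (hα0 : 0 ≤ α) (hα1 : α < 1)
    (hv : 0 < v) : GainFeasible W N n v (gainOpt W N n α v) := by
  refine ⟨(gainOpt_pos hW hn hnN hv le_rfl hn).le, fun j hj => ?_,
    sum_gainW_mul_gainOpt hW hn hnN hα1.ne⟩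
  have hj := mem_Icc.1 hj
  have : 0 ≤ α / (1 - α) := div_nonneg hα0 (sub_nonneg.2 hα1.le)
  simp_rw [gainOpt_eq_gainRatio_rpow_mul]
  gcongr
  · exact (gainY_pos hW hn hnN hv).le
  · exact (gainRatio_pos hW hn hnN hj.1 (by omega)).le
  · exact gainRatio_le_gainRatio_succ hW hn hnN (by omega)

lemma sum_gainRatio_mul (hn : 1 ≤ n) (y : ℕ → ℝ) :
    ∑ j ∈ Icc 1 n, gainRatio W N n j * y j =
      transIdx W N n / (∑ j ∈ Icc 1 (transIdx W N n), gainW W N n j) *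
          ∑ j ∈ Icc 1 n, gainW W N n j * y j +
        (∑ j ∈ Icc 1 (transIdx W N n), y j - transIdx W N n /
          (∑ j ∈ Icc 1 (transIdx W N n), gainW W N n j) *
            ∑ j ∈ Icc 1 (transIdx W N n), gainW W N n j * y j) := by
  obtain ⟨-, hJn, -⟩ := transIdx_spec (W := W) (N := N) hn
  have hhead : ∑ j ∈ Icc 1 (transIdx W N n), gainRatio W N n j * y j =
      ∑ j ∈ Icc 1 (transIdx W N n), y j :=
    sum_congr rfl fun j hj => by rw [gainRatio, if_pos (mem_Icc.1 hj).2, one_mul]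
  have htail : ∑ j ∈ Icc (transIdx W N n + 1) n, gainRatio W N n j * y j =
      transIdx W N n / (∑ j ∈ Icc 1 (transIdx W N n), gainW W N n j) *
        ∑ j ∈ Icc (transIdx W N n + 1) n, gainW W N n j * y j := by
    rw [mul_sum]
    refine sum_congr rfl fun j hj => ?_
    rw [gainRatio, if_neg (by grind)]
    ring
  rw [sum_Icc_one_eq_add _ hJn, sum_Icc_one_eq_add (fun j => gainW W N n j * y j) hJn, hhead,
    htail]
  ring

lemma div_mul_le_sum_gainRatio_mul (hW : IsPWF W) (hn : 1 ≤ n) (hnN : n ≤ N) {y : ℕ → ℝ}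
    (hy : GainFeasible W N n v y) :
    transIdx W N n / (∑ j ∈ Icc 1 (transIdx W N n), gainW W N n j) * v ≤
      ∑ j ∈ Icc 1 n, gainRatio W N n j * y j := by
  obtain ⟨-, hJn, -⟩ := transIdx_spec (W := W) (N := N) hn
  have hS := sum_gainW_transIdx_pos hW hn hnN
  have hcheb := mul_sum_mul_le_sum_mul_sum (gainW W N n) y (transIdx W N n)
    (fun k hk hkJ => mul_sum_Icc_le_mul_sum_Icc_of_mul_le_sum _
      (fun i hi hiJ => mul_gainW_succ_le_sum_of_lt_transIdx hn hi hiJ) hk hkJ)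
    (hy.monotoneOn.mono (Set.Icc_subset_Icc le_rfl hJn))
  rw [sum_gainRatio_mul hn, hy.2.2, le_add_iff_nonneg_right, sub_nonneg, div_mul_eq_mul_div,
    div_le_iff₀ hS]
  linarith

lemma sum_gainRatio_mul_gainOpt (hW : IsPWF W) (hn : 1 ≤ n) (hnN : n ≤ N) (hα : α ≠ 1) :
    ∑ j ∈ Icc 1 n, gainRatio W N n j * gainOpt W N n α v j =
      transIdx W N n / (∑ j ∈ Icc 1 (transIdx W N n), gainW W N n j) * v := by
  have hS := sum_gainW_transIdx_pos hW hn hnN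
  have hhead : ∀ f : ℕ → ℝ, ∑ j ∈ Icc 1 (transIdx W N n), f j * gainOpt W N n α v j =
      (∑ j ∈ Icc 1 (transIdx W N n), f j) * gainY W N n α v := fun f => by
    rw [sum_mul]
    exact sum_congr rfl fun j hj => by rw [gainOpt_of_le_transIdx (mem_Icc.1 hj).2]
  have hcount := hhead fun _ => 1
  simp only [one_mul, sum_const, Nat.card_Icc, add_tsub_cancel_right, nsmul_eq_mul,
    mul_one] at hcount
  rw [sum_gainRatio_mul hn, sum_gainW_mul_gainOpt hW hn hnN hα, hhead, hcount]
  field_simp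
  ring

lemma gainOpt_rpow_sub_one (hW : IsPWF W) (hn : 1 ≤ n) (hnN : n ≤ N) (hα0 : α ≠ 0) (hα1 : α ≠ 1)
    (hv : 0 < v) {j : ℕ} (hj : 1 ≤ j) (hjn : j ≤ n) :
    gainOpt W N n α v j ^ (1 / α - 1) = gainRatio W N n j * gainY W N n α v ^ (1 / α - 1) := by
  have hr := (gainRatio_pos hW hn hnN hj hjn).le
  have hexp : α / (1 - α) * (1 / α - 1) = 1 := by
    field_simp [sub_ne_zero.2 hα1.symm]
  rw [gainOpt_eq_gainRatio_rpow_mul, Real.mul_rpow (Real.rpow_nonneg hr _)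
    (gainY_pos hW hn hnN hv).le, ← Real.rpow_mul hr, hexp, Real.rpow_one]

end GainOpt

/-- `y*` is feasible for the gain subproblem and is its unique global
minimizer: every feasible `y` differing from `y*` has strictly larger objective. -/
theorem gainOpt_feasible_and_unique_min (W : ℝ → ℝ) (N n : ℕ) (α v : ℝ)
    (hW : IsPWF W) (hn1 : 1 ≤ n) (hnN : n ≤ N)
    (hα0 : 0 < α) (hα1 : α < 1) (hv : 0 < v) :
    GainFeasible W N n v (gainOpt W N n α v) ∧
    ∀ y : ℕ → ℝ, GainFeasible W N n v y →
      (∃ j ∈ Finset.Icc 1 n, y j ≠ gainOpt W N n α v j) →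
      ∑ j ∈ Finset.Icc 1 n, gainOpt W N n α v j ^ (1 / α) <
        ∑ j ∈ Finset.Icc 1 n, y j ^ (1 / α) := by
  refine ⟨gainFeasible_gainOpt hW hn1 hnN hα0.le hα1 hv, fun y hy hne => ?_⟩
  refine sum_rpow_lt_of_gradient_nonneg (one_lt_one_div hα0 hα1)
    (fun j hj => gainOpt_pos hW hn1 hnN hv (mem_Icc.1 hj).1 (mem_Icc.1 hj).2)
    (fun j hj => hy.nonneg (mem_Icc.1 hj).1 (mem_Icc.1 hj).2) ?_ hne
  have hgrad : ∑ j ∈ Icc 1 n, gainOpt W N n α v j ^ (1 / α - 1) * (y j - gainOpt W N n α v j) =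
      gainY W N n α v ^ (1 / α - 1) * (∑ j ∈ Icc 1 n, gainRatio W N n j * y j -
        ∑ j ∈ Icc 1 n, gainRatio W N n j * gainOpt W N n α v j) := by
    rw [← sum_sub_distrib, mul_sum]
    refine sum_congr rfl fun j hj => ?_
    rw [gainOpt_rpow_sub_one hW hn1 hnN hα0.ne' hα1.ne hv (mem_Icc.1 hj).1 (mem_Icc.1 hj).2]
    ring
  rw [hgrad, sum_gainRatio_mul_gainOpt hW hn1 hnN hα1.ne]
  exact mul_nonneg (Real.rpow_nonneg (gainY_pos hW hn1 hnN hv).le _)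
    (sub_nonneg.2 (div_mul_le_sum_gainRatio_mul hW hn1 hnN hy))
end

section
/- Let N ∈ ℕ, 1 ≤ n⁺ ≤ N, let W⁺ be a probability weighting function (in particular inverse S-shaped), and let h⁺ be the gain decision weights. Then there exists a unique index ĵ ∈ {1,…,n⁺} such that h⁺_{n⁺} > h⁺_{n⁺−1} > … > h⁺_{ĵ} (a strictly decreasing chain from index n⁺ down to ĵ, vacuous if ĵ = n⁺) and h⁺_{ĵ} ≤ h⁺_{ĵ−1} < h⁺_{ĵ−2} < … < h⁺_1 (vacuous if ĵ = 1); such an index is called a flexional index. -/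
open Finset

/-- `jhat` is a flexional index for the gain decision weights:
`h⁺_n > h⁺_{n−1} > … > h⁺_jhat` and `h⁺_jhat ≤ h⁺_{jhat−1} < h⁺_{jhat−2} < … < h⁺_1`. -/
def IsFlexIdx (W : ℝ → ℝ) (N n jhat : ℕ) : Prop :=
  1 ≤ jhat ∧ jhat ≤ n ∧
  (∀ j : ℕ, jhat ≤ j → j < n → gainW W N n j < gainW W N n (j + 1)) ∧
  (jhat = 1 ∨ gainW W N n jhat ≤ gainW W N n (jhat - 1)) ∧
  (∀ j : ℕ, 1 ≤ j → j + 1 ≤ jhat - 1 → gainW W N n (j + 1) < gainW W N n j)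

/-! With `δ = 1/N` the gain weights are increments of `W`: `h⁺_j = D ((n - j)/N)` where
`D x = W (x + δ) - W x`. As `W'` first falls and then rises, `D' x = W' (x + δ) - W' x` can only
change sign from negative to positive, so by the mean value theorem `D` has no weak local
maximum on the grid: once `h⁺_j ≤ h⁺_{j+1}`, the weights increase strictly from `j + 1` on.
The flexional index is the least `k` from which the weights increase strictly, and two flexional
indices `a < b` would give `h⁺_{b-1} < h⁺_b ≤ h⁺_{b-1}`. -/

open Set in
theorem lt_shift_of_le_shift {f : ℝ → ℝ} {a b x₀ δ x y : ℝ}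
    (hanti : StrictAntiOn f (Icc a x₀)) (hmono : StrictMonoOn f (Icc x₀ b)) (hδ : 0 < δ)
    (hx : a ≤ x) (hxy : x < y) (hy : y + δ ≤ b) (hle : f x ≤ f (x + δ)) :
    f y < f (y + δ) := by
  rcases le_or_gt x₀ y with hy₀ | hy₀
  · exact hmono ⟨hy₀, by linarith⟩ ⟨by linarith, hy⟩ (by linarith)
  have hfy : f y < f x := hanti ⟨hx, by linarith⟩ ⟨by linarith, hy₀.le⟩ hxy
  have hxδ : x₀ < x + δ := by
    by_contra! h
    exact (hanti ⟨hx, by linarith⟩ ⟨by linarith, h⟩ (by linarith : x < x + δ)).not_ge hle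
  have hfδ : f (x + δ) < f (y + δ) := hmono ⟨hxδ.le, by linarith⟩ ⟨by linarith, hy⟩ (by linarith)
  linarith

open Set in
theorem increment_lt_of_increment_le {W : ℝ → ℝ} {a b x₀ δ p q r : ℝ}
    (hcont : ContinuousOn W (Icc a b)) (hdiff : DifferentiableOn ℝ W (Ioo a b))
    (hanti : StrictAntiOn (deriv W) (Icc a x₀)) (hmono : StrictMonoOn (deriv W) (Icc x₀ b))
    (hδ : 0 < δ) (hp : a ≤ p) (hpq : p < q) (hqr : q < r) (hr : r + δ ≤ b)
    (hle : W (r + δ) - W r ≤ W (q + δ) - W q) :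
    W (q + δ) - W q < W (p + δ) - W p := by
  set D : ℝ → ℝ := fun x => W (x + δ) - W x
  have hD : ∀ x ∈ Ioo a (b - δ), HasDerivAt D (deriv W (x + δ) - deriv W x) x := by
    intro x hx
    have hWx := (hdiff.differentiableAt (Ioo_mem_nhds hx.1 (by linarith [hx.2]))).hasDerivAt
    have hWxδ := (hdiff.differentiableAt
      (Ioo_mem_nhds (by linarith [hx.1] : a < x + δ) (by linarith [hx.2]))).hasDerivAt
    exact (hWxδ.comp_add_const x δ).sub hWx
  have hDcont : ContinuousOn D (Icc a (b - δ)) :=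
    (hcont.comp (continuous_add_const δ).continuousOn
      fun x hx => ⟨by linarith [hx.1], by linarith [hx.2]⟩).sub
    (hcont.mono fun x hx => ⟨hx.1, by linarith [hx.2]⟩)
  obtain ⟨ξ, hξ, hDξ⟩ := exists_hasDerivAt_eq_slope D _ hqr
    (hDcont.mono (Icc_subset_Icc (by linarith) (by linarith)))
    fun x hx => hD x ⟨by linarith [hx.1], by linarith [hx.2]⟩
  obtain ⟨η, hη, hDη⟩ := exists_hasDerivAt_eq_slope D _ hpq
    (hDcont.mono (Icc_subset_Icc hp (by linarith)))
    fun x hx => hD x ⟨by linarith [hx.1], by linarith [hx.2]⟩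
  by_contra! hge
  have hη' : deriv W η ≤ deriv W (η + δ) := by
    rw [← sub_nonneg, hDη]
    exact div_nonneg (sub_nonneg.2 hge) (by linarith)
  have hξ' : deriv W (ξ + δ) ≤ deriv W ξ := by
    rw [← sub_nonpos, hDξ]
    exact div_nonpos_of_nonpos_of_nonneg (sub_nonpos.2 hle) (by linarith [hξ.1])
  exact (lt_shift_of_le_shift hanti hmono hδ (by linarith [hη.1]) (by linarith [hη.2, hξ.1])
    (by linarith [hξ.2]) hη').not_ge hξ'

theorem gainW_eq (W : ℝ → ℝ) (N n j : ℕ) :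
    gainW W N n j = W (((n : ℝ) - j) / N + 1 / N) - W (((n : ℝ) - j) / N) := by
  rw [gainW, ← add_div]

theorem gainW_succ_lt_of_le {W : ℝ → ℝ} {N n j : ℕ} (hW : InverseSShaped W) (hnN : n ≤ N)
    (hj : 1 ≤ j) (hjn : j + 2 ≤ n) (hle : gainW W N n j ≤ gainW W N n (j + 1)) :
    gainW W N n (j + 1) < gainW W N n (j + 2) := by
  obtain ⟨-, hC1, x₀, -, hanti, hmono⟩ := hW
  have hN : (0 : ℝ) < N := Nat.cast_pos.2 (by omega)
  have hj' : (1 : ℝ) ≤ j := by exact_mod_cast hj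
  have hjn' : (j : ℝ) + 2 ≤ n := by exact_mod_cast hjn
  have hnN' : (n : ℝ) ≤ N := by exact_mod_cast hnN
  simp only [gainW_eq, Nat.cast_add, Nat.cast_ofNat, Nat.cast_one] at hle ⊢
  refine increment_lt_of_increment_le hC1.continuousOn
    (hC1.differentiableOn one_ne_zero |>.mono Set.Ioo_subset_Icc_self) hanti hmono
    (by positivity) (div_nonneg (by linarith) hN.le) ?_ ?_ ?_ hle
  · rw [div_lt_div_iff_of_pos_right hN]; linarith
  · rw [div_lt_div_iff_of_pos_right hN]; linarith
  · rw [← add_div, div_le_one hN]; linarith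

theorem forall_lt_succ_of_le_succ {g : ℕ → ℝ} {n j : ℕ}
    (hstep : ∀ j, 1 ≤ j → j + 2 ≤ n → g j ≤ g (j + 1) → g (j + 1) < g (j + 2))
    (hj : 1 ≤ j) (hle : g j ≤ g (j + 1)) :
    ∀ k, j + 1 ≤ k → k < n → g k < g (k + 1) := by
  intro k hk
  induction k, hk using Nat.le_induction with
  | base => exact fun hn => hstep j hj (by omega) hle
  | succ k hk ih => exact fun hn => hstep k (by omega) (by omega) (ih (by omega)).le

theorem isFlexIdx_sInf {W : ℝ → ℝ} {N n : ℕ} (hn : 1 ≤ n)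
    (hstep : ∀ j, 1 ≤ j → j + 2 ≤ n →
      gainW W N n j ≤ gainW W N n (j + 1) → gainW W N n (j + 1) < gainW W N n (j + 2)) :
    IsFlexIdx W N n
      (sInf {k | 1 ≤ k ∧ ∀ j, k ≤ j → j < n → gainW W N n j < gainW W N n (j + 1)}) := by
  set S := {k | 1 ≤ k ∧ ∀ j, k ≤ j → j < n → gainW W N n j < gainW W N n (j + 1)}
  have hnS : n ∈ S := ⟨hn, fun j hj hjn => absurd hjn (by omega)⟩
  obtain ⟨hk1, hkinc⟩ : sInf S ∈ S := Nat.sInf_mem ⟨n, hnS⟩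
  refine ⟨hk1, Nat.sInf_le hnS, hkinc, ?_, fun j hj hjk => ?_⟩
  · by_contra! h
    have hpred : sInf S - 1 ∈ S := by
      refine ⟨by omega, fun j hj hjn => ?_⟩
      rcases hj.eq_or_lt with rfl | hj
      · rw [Nat.sub_add_cancel hk1]; exact h.2
      · exact hkinc j (by omega) hjn
    have := Nat.sInf_le hpred
    omega
  · by_contra! hle
    have := Nat.sInf_le (show j + 1 ∈ S from ⟨by omega, forall_lt_succ_of_le_succ hstep hj hle⟩)
    omega

theorem IsFlexIdx.le {W : ℝ → ℝ} {N n a b : ℕ} (ha : IsFlexIdx W N n a)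
    (hb : IsFlexIdx W N n b) : b ≤ a := by
  by_contra! hab
  obtain ⟨ha1, -, hainc, -, -⟩ := ha
  obtain ⟨-, hbn, -, hb1 | hbdec, -⟩ := hb
  · omega
  · have hstep := hainc (b - 1) (by omega) (by omega)
    rw [Nat.sub_add_cancel (by omega)] at hstep
    linarith

/-- there exists a unique flexional index. -/
theorem exists_unique_flexional_index (W : ℝ → ℝ) (N n : ℕ)
    (hW : IsPWF W) (hn1 : 1 ≤ n) (hnN : n ≤ N) :
    ∃! jhat : ℕ, IsFlexIdx W N n jhat := by
  have hflex := isFlexIdx_sInf hn1 fun j hj hjn => gainW_succ_lt_of_le hW.1 hnN hj hjn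
  exact ⟨_, hflex, fun k hk => le_antisymm (hflex.le hk) (hk.le hflex)⟩
end

section
/- Let N ∈ ℕ, 1 ≤ n⁻ ≤ N, β ∈ (0,1), λ > 0, v ≥ 0, let W⁻ be a probability weighting function and let h⁻ be the loss decision weights. Then there exists an index L ∈ {1,…,n⁻} such that the vector y* defined by y*_i = v / ∑_{i'=1}^{L} h⁻_{i'} for 1 ≤ i ≤ L and y*_i = 0 for L+1 ≤ i ≤ n⁻ is a global optimum of the loss subproblem: y* is feasible and for every feasible y, −∑_{i=1}^{n⁻} (y*_i/λ)^{1/β} ≤ −∑_{i=1}^{n⁻} (y_i/λ)^{1/β}. -/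
open Finset

/-- Loss decision weights: `h⁻_i = W⁻(i/N) − W⁻((i−1)/N)` for `i = 1,…,n⁻`. -/
noncomputable def lossW (W : ℝ → ℝ) (N i : ℕ) : ℝ :=
  W ((i : ℝ) / N) - W (((i : ℝ) - 1) / N)

/-- Feasibility for the loss subproblem: `y_1 ≥ y_2 ≥ … ≥ y_n ≥ 0` and `∑ h⁻_i y_i = v`. -/
def LossFeasible (W : ℝ → ℝ) (N n : ℕ) (v : ℝ) (y : ℕ → ℝ) : Prop :=
  0 ≤ y n ∧ (∀ i ∈ Finset.Icc 1 (n - 1), y (i + 1) ≤ y i) ∧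
  ∑ i ∈ Finset.Icc 1 n, lossW W N i * y i = v

private lemma sum_ite_le_aux (n L : ℕ) (hL : L ≤ n) (f : ℕ → ℝ) :
    ∑ i ∈ Finset.Icc 1 n, (if i ≤ L then f i else 0) = ∑ i ∈ Finset.Icc 1 L, f i := by
  rw [← Finset.sum_filter]
  congr 1
  ext a
  simp only [Finset.mem_filter, Finset.mem_Icc]
  omega

private lemma sum_ite_ge_aux (n i : ℕ) (hi : 1 ≤ i) (f : ℕ → ℝ) :
    ∑ M ∈ Finset.Icc 1 n, (if i ≤ M then f M else 0) = ∑ M ∈ Finset.Icc i n, f M := by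
  rw [← Finset.sum_filter]
  congr 1
  ext a
  simp only [Finset.mem_filter, Finset.mem_Icc]
  omega

private lemma keysum_aux (n L : ℕ) (hL : L ≤ n) (h : ℕ → ℝ) (c : ℝ) :
    ∑ i ∈ Finset.Icc 1 n, h i * (if i ≤ L then c else 0)
      = (∑ i ∈ Finset.Icc 1 L, h i) * c := by
  rw [Finset.sum_mul, ← sum_ite_le_aux n L hL (fun i => h i * c)]
  apply Finset.sum_congr rfl
  intro i _
  split <;> simp

private lemma objsum_aux (n L : ℕ) (hL : L ≤ n) (p lam c : ℝ) (hp : p ≠ 0) :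
    ∑ i ∈ Finset.Icc 1 n, ((if i ≤ L then c else 0) / lam) ^ p
      = (L : ℝ) * ((c / lam) ^ p) := by
  have key : ∀ i ∈ Finset.Icc 1 n, ((if i ≤ L then c else 0) / lam) ^ p
      = (if i ≤ L then (c / lam) ^ p else 0) := by
    intro i _
    split
    · rfl
    · rw [zero_div, Real.zero_rpow hp]
  rw [Finset.sum_congr rfl key, sum_ite_le_aux n L hL (fun _ => (c / lam) ^ p),
    Finset.sum_const, Nat.card_Icc, nsmul_eq_mul]
  norm_num

private noncomputable def tfun (y : ℕ → ℝ) (n M : ℕ) : ℝ :=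
  (if M ≤ n then y M else 0) - (if M + 1 ≤ n then y (M + 1) else 0)

private lemma telescope_aux (y : ℕ → ℝ) (n i : ℕ) (hi1 : 1 ≤ i) (hi : i ≤ n) :
    ∑ M ∈ Finset.Icc i n, tfun y n M = y i := by
  rw [← Finset.Ico_add_one_right_eq_Icc, Finset.sum_Ico_eq_sum_range]
  have key : ∑ k ∈ Finset.range (n + 1 - i),
      ((if i + k ≤ n then y (i + k) else 0) - (if i + (k + 1) ≤ n then y (i + (k + 1)) else 0))
      = (if i + 0 ≤ n then y (i + 0) else 0)
        - (if i + (n + 1 - i) ≤ n then y (i + (n + 1 - i)) else 0) :=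
    Finset.sum_range_sub' (fun k => if i + k ≤ n then y (i + k) else 0) (n + 1 - i)
  simp only [tfun]
  simp only [← add_assoc] at key
  rw [key, add_zero, if_pos hi, if_neg (by omega), sub_zero]

private noncomputable def Ssum (h : ℕ → ℝ) (M : ℕ) : ℝ := ∑ i ∈ Finset.Icc 1 M, h i

private lemma loss_aux (n : ℕ) (h : ℕ → ℝ)
    (hpos : ∀ i ∈ Finset.Icc 1 n, 0 < h i)
    (p lam v : ℝ) (hp : 1 ≤ p) (hlam : 0 < lam) (hv : 0 < v)
    (L : ℕ) (hL1 : 1 ≤ L) (hLn : L ≤ n)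
    (hmax : ∀ M ∈ Finset.Icc 1 n,
      (M : ℝ) * ((v / Ssum h M / lam) ^ p)
        ≤ (L : ℝ) * ((v / Ssum h L / lam) ^ p))
    (y : ℕ → ℝ)
    (hchain : ∀ i ∈ Finset.Icc 1 (n - 1), y (i + 1) ≤ y i)
    (hyn : 0 ≤ y n)
    (hsum : ∑ i ∈ Finset.Icc 1 n, h i * y i = v) :
    ∑ i ∈ Finset.Icc 1 n, (y i / lam) ^ p
      ≤ (L : ℝ) * ((v / Ssum h L / lam) ^ p) := by
  have hp0 : p ≠ 0 := by positivity
  have hSpos : ∀ M, 1 ≤ M → M ≤ n → 0 < Ssum h M := by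
    intro M h1 h2
    apply Finset.sum_pos
    · intro i hi
      rw [Finset.mem_Icc] at hi
      exact hpos i (Finset.mem_Icc.mpr ⟨hi.1, le_trans hi.2 h2⟩)
    · exact ⟨1, Finset.mem_Icc.mpr ⟨le_refl 1, h1⟩⟩
  have hanti : ∀ a b : ℕ, 1 ≤ a → a ≤ b → b ≤ n → y b ≤ y a := by
    intro a b ha hab hbn
    induction b, hab using Nat.le_induction with
    | base => exact le_refl _
    | succ b hab ih =>
      exact le_trans (hchain b (Finset.mem_Icc.mpr ⟨by omega, by omega⟩)) (ih (by omega))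
  have htnn : ∀ M ∈ Finset.Icc 1 n, 0 ≤ tfun y n M := by
    intro M hM
    obtain ⟨h1, h2⟩ := Finset.mem_Icc.mp hM
    rw [tfun, if_pos h2]
    by_cases hMn : M + 1 ≤ n
    · rw [if_pos hMn]
      exact sub_nonneg.mpr (hchain M (Finset.mem_Icc.mpr ⟨h1, by omega⟩))
    · rw [if_neg hMn]
      have hMe : M = n := by omega
      rw [hMe, sub_zero]; exact hyn
  have hwnn : ∀ M ∈ Finset.Icc 1 n, 0 ≤ tfun y n M * Ssum h M / v := by
    intro M hM
    obtain ⟨h1, h2⟩ := Finset.mem_Icc.mp hM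
    exact div_nonneg (mul_nonneg (htnn M hM) (hSpos M h1 h2).le) hv.le
  have hts : ∑ M ∈ Finset.Icc 1 n, tfun y n M * Ssum h M = v := by
    have e1 : ∀ M ∈ Finset.Icc 1 n, tfun y n M * Ssum h M
        = ∑ i ∈ Finset.Icc 1 n, h i * (if i ≤ M then tfun y n M else 0) := by
      intro M hM
      obtain ⟨h1, h2⟩ := Finset.mem_Icc.mp hM
      rw [keysum_aux n M h2 h (tfun y n M), Ssum, mul_comm]
    rw [Finset.sum_congr rfl e1, Finset.sum_comm]
    have e2 : ∀ i ∈ Finset.Icc 1 n,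
        ∑ M ∈ Finset.Icc 1 n, h i * (if i ≤ M then tfun y n M else 0) = h i * y i := by
      intro i hi
      obtain ⟨h1, h2⟩ := Finset.mem_Icc.mp hi
      rw [← Finset.mul_sum, sum_ite_ge_aux n i h1, telescope_aux y n i h1 h2]
    rw [Finset.sum_congr rfl e2, hsum]
  have hα1 : ∑ M ∈ Finset.Icc 1 n, tfun y n M * Ssum h M / v = 1 := by
    rw [← Finset.sum_div, hts, div_self hv.ne']
  have hjen : ∀ i ∈ Finset.Icc 1 n, (y i / lam) ^ p
      ≤ ∑ M ∈ Finset.Icc 1 n, (tfun y n M * Ssum h M / v)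
          * (((if i ≤ M then v / Ssum h M else 0) / lam) ^ p) := by
    intro i hi
    obtain ⟨hi1, hi2⟩ := Finset.mem_Icc.mp hi
    have hznn : ∀ M ∈ Finset.Icc 1 n, 0 ≤ (if i ≤ M then v / Ssum h M else 0) / lam := by
      intro M hM
      obtain ⟨h1, h2⟩ := Finset.mem_Icc.mp hM
      apply div_nonneg _ hlam.le
      split
      · exact div_nonneg hv.le (hSpos M h1 h2).le
      · exact le_refl 0
    have key := Real.rpow_arith_mean_le_arith_mean_rpow (Finset.Icc 1 n)
      (fun M => tfun y n M * Ssum h M / v)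
      (fun M => (if i ≤ M then v / Ssum h M else 0) / lam) hwnn hα1 hznn hp
    have hyeq : ∑ M ∈ Finset.Icc 1 n,
        (tfun y n M * Ssum h M / v) * ((if i ≤ M then v / Ssum h M else 0) / lam)
        = y i / lam := by
      have e3 : ∀ M ∈ Finset.Icc 1 n,
          (tfun y n M * Ssum h M / v) * ((if i ≤ M then v / Ssum h M else 0) / lam)
          = (if i ≤ M then tfun y n M else 0) / lam := by
        intro M hM
        obtain ⟨h1, h2⟩ := Finset.mem_Icc.mp hM
        have hS0 : Ssum h M ≠ 0 := (hSpos M h1 h2).ne'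
        split
        · field_simp
        · simp
      rw [Finset.sum_congr rfl e3, ← Finset.sum_div, sum_ite_ge_aux n i hi1,
        telescope_aux y n i hi1 hi2]
    rw [hyeq] at key
    exact key
  calc ∑ i ∈ Finset.Icc 1 n, (y i / lam) ^ p
      ≤ ∑ i ∈ Finset.Icc 1 n, ∑ M ∈ Finset.Icc 1 n, (tfun y n M * Ssum h M / v)
          * (((if i ≤ M then v / Ssum h M else 0) / lam) ^ p) := Finset.sum_le_sum hjen
    _ = ∑ M ∈ Finset.Icc 1 n, (tfun y n M * Ssum h M / v)
          * ((M : ℝ) * ((v / Ssum h M / lam) ^ p)) := by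
        rw [Finset.sum_comm]
        apply Finset.sum_congr rfl
        intro M hM
        obtain ⟨h1, h2⟩ := Finset.mem_Icc.mp hM
        rw [← Finset.mul_sum, objsum_aux n M h2 p lam (v / Ssum h M) hp0]
    _ ≤ ∑ M ∈ Finset.Icc 1 n, (tfun y n M * Ssum h M / v)
          * ((L : ℝ) * ((v / Ssum h L / lam) ^ p)) := by
        apply Finset.sum_le_sum
        intro M hM
        exact mul_le_mul_of_nonneg_left (hmax M hM) (hwnn M hM)
    _ = (L : ℝ) * ((v / Ssum h L / lam) ^ p) := by
        rw [← Finset.sum_mul, hα1, one_mul]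


theorem loss_subproblem_optimal_solution (W : ℝ → ℝ) (N n : ℕ) (β lam v : ℝ)
    (hW : IsPWF W) (hn1 : 1 ≤ n) (hnN : n ≤ N)
    (hβ0 : 0 < β) (hβ1 : β < 1) (hlam : 0 < lam) (hv : 0 ≤ v) :
    ∃ L ∈ Finset.Icc 1 n,
      LossFeasible W N n v
        (fun i => if i ≤ L then v / ∑ i' ∈ Finset.Icc 1 L, lossW W N i' else 0) ∧
      ∀ y : ℕ → ℝ, LossFeasible W N n v y →
        -∑ i ∈ Finset.Icc 1 n,
            ((if i ≤ L then v / ∑ i' ∈ Finset.Icc 1 L, lossW W N i' else 0) / lam) ^ (1 / β)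
          ≤ -∑ i ∈ Finset.Icc 1 n, (y i / lam) ^ (1 / β) := by
  obtain ⟨⟨hmono, -, -⟩, hW0, hW1⟩ := hW
  have hN1 : 1 ≤ N := le_trans hn1 hnN
  have hN0 : (0 : ℝ) < N := by exact_mod_cast hN1
  have hpos : ∀ i ∈ Finset.Icc 1 n, 0 < lossW W N i := by
    intro i hi
    obtain ⟨h1, h2⟩ := Finset.mem_Icc.mp hi
    have h1i : (1 : ℝ) ≤ (i : ℝ) := by exact_mod_cast h1
    have hiN : (i : ℝ) ≤ (N : ℝ) := by exact_mod_cast le_trans h2 hnN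
    have hm1 : ((i : ℝ) - 1) / N ∈ Set.Icc (0 : ℝ) 1 := by
      constructor
      · apply div_nonneg (by linarith) hN0.le
      · rw [div_le_one hN0]; linarith
    have hm2 : (i : ℝ) / N ∈ Set.Icc (0 : ℝ) 1 := by
      constructor
      · positivity
      · rw [div_le_one hN0]; linarith
    have hlt : ((i : ℝ) - 1) / N < (i : ℝ) / N := by
      exact (div_lt_div_iff_of_pos_right hN0).mpr (by linarith)
    exact sub_pos.mpr (hmono hm1 hm2 hlt)
  have hp : (1 : ℝ) ≤ 1 / β := by
    rw [le_div_iff₀ hβ0]; linarith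
  have hp0 : (1 : ℝ) / β ≠ 0 := by positivity
  obtain ⟨L, hLmem, hLmax⟩ := Finset.exists_max_image (Finset.Icc 1 n)
    (fun M => (M : ℝ) * ((v / Ssum (lossW W N) M / lam) ^ (1 / β)))
    ⟨1, Finset.mem_Icc.mpr ⟨le_refl 1, hn1⟩⟩
  obtain ⟨hL1, hLn⟩ := Finset.mem_Icc.mp hLmem
  have hSL : 0 < ∑ i' ∈ Finset.Icc 1 L, lossW W N i' := by
    apply Finset.sum_pos
    · intro i hi
      obtain ⟨h1, h2⟩ := Finset.mem_Icc.mp hi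
      exact hpos i (Finset.mem_Icc.mpr ⟨h1, le_trans h2 hLn⟩)
    · exact ⟨1, Finset.mem_Icc.mpr ⟨le_refl 1, hL1⟩⟩
  refine ⟨L, hLmem, ⟨?_, ?_, ?_⟩, ?_⟩
  · dsimp only
    split
    · exact div_nonneg hv hSL.le
    · exact le_refl 0
  · intro i hi
    dsimp only
    split_ifs with h1 h2 h3
    · exact le_refl _
    · omega
    · exact div_nonneg hv hSL.le
    · exact le_refl 0
  · rw [keysum_aux n L hLn (lossW W N) (v / ∑ i' ∈ Finset.Icc 1 L, lossW W N i'),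
      mul_comm, div_mul_cancel₀ _ hSL.ne']
  · intro y hy
    obtain ⟨hy0, hychain, hysum⟩ := hy
    rw [neg_le_neg_iff]
    by_cases hv' : v = 0
    · subst hv'
      have hyz : ∀ i ∈ Finset.Icc 1 n, lossW W N i * y i = 0 := by
        rw [← Finset.sum_eq_zero_iff_of_nonneg]
        · exact hysum
        · intro i hi
          obtain ⟨h1, h2⟩ := Finset.mem_Icc.mp hi
          have hanti : y i ≥ y n := by
            have : ∀ a b : ℕ, 1 ≤ a → a ≤ b → b ≤ n → y b ≤ y a := by
              intro a b ha hab hbn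
              induction b, hab using Nat.le_induction with
              | base => exact le_refl _
              | succ b hab ih =>
                exact le_trans (hychain b (Finset.mem_Icc.mpr ⟨by omega, by omega⟩))
                  (ih (by omega))
            exact this i n h1 h2 le_rfl
          exact mul_nonneg (hpos i hi).le (le_trans hy0 hanti)
      have lhs0 : ∑ i ∈ Finset.Icc 1 n, (y i / lam) ^ (1 / β) = 0 := by
        apply Finset.sum_eq_zero
        intro i hi
        have : y i = 0 := by
          have h0 := hyz i hi
          rcases mul_eq_zero.mp h0 with h | h
          · exact absurd h (hpos i hi).ne'
          · exact h
        rw [this, zero_div, Real.zero_rpow hp0]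
      have rhs0 : ∑ i ∈ Finset.Icc 1 n,
          ((if i ≤ L then (0:ℝ) / ∑ i' ∈ Finset.Icc 1 L, lossW W N i' else 0) / lam)
            ^ (1 / β) = 0 := by
        apply Finset.sum_eq_zero
        intro i hi
        simp [Real.zero_rpow (by positivity : β⁻¹ ≠ 0), Real.zero_rpow hp0]
      rw [lhs0, rhs0]
    · have hv2 : 0 < v := lt_of_le_of_ne hv (Ne.symm hv')
      have main := loss_aux n (lossW W N) hpos (1 / β) lam v hp hlam hv2 L hL1 hLn
        hLmax y hychain hy0 hysum
      rw [objsum_aux n L hLn (1 / β) lam (v / ∑ i' ∈ Finset.Icc 1 L, lossW W N i') hp0]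
      simp only [Ssum] at main
      exact main
end

section
/- Let N ∈ ℕ, 1 ≤ n⁻ ≤ N, β ∈ (0,1), λ > 0, v ≥ 0, let W⁻ be a probability weighting function and let h⁻ be the loss decision weights. Then the optimal value (minimum) of the loss subproblem equals −(v/λ)^{1/β} · max_{L ∈ {1,…,n⁻}} L · ( ∑_{i=1}^{L} h⁻_i )^{−1/β}. -/
open Finset

/-!
Write `p = 1/β ≥ 1`, `H L = h⁻_1 + … + h⁻_L > 0` and `M = max_L L·H_L^{-p}`. A feasible `y`
is a nonnegative combination `∑ c_L 1_{[1,L]}` of indicators of initial segments, and the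
budget constraint reads `∑ c_L H_L = v`. Minkowski's inequality in `ℓ^p` gives
`(∑ y_i^p)^{1/p} ≤ ∑ c_L L^{1/p} ≤ M^{1/p} ∑ c_L H_L = M^{1/p} v`,
so `∑ (y_i/λ)^p ≤ M (v/λ)^p`, and the single step `(v/H_L) 1_{[1,L]}` at a maximising `L`
attains this bound.
-/

lemma Icc_one_filter_le {n L : ℕ} (hL : L ≤ n) : {i ∈ Icc 1 n | i ≤ L} = Icc 1 L := by
  ext i
  simp only [mem_filter, mem_Icc]
  omega

lemma sum_Icc_mul_ite_le (g : ℕ → ℝ) (a : ℝ) {n L : ℕ} (hL : L ≤ n) :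
    ∑ i ∈ Icc 1 n, g i * (if i ≤ L then a else 0) = a * ∑ i ∈ Icc 1 L, g i := by
  simp_rw [mul_ite, mul_zero]
  rw [← sum_filter, Icc_one_filter_le hL, ← sum_mul, mul_comm]

lemma sum_Icc_rpow_ite_le {p : ℝ} (hp : p ≠ 0) (a : ℝ) {n L : ℕ} (hL : L ≤ n) :
    ∑ i ∈ Icc 1 n, (if i ≤ L then a else 0) ^ p = L * a ^ p := by
  simp_rw [apply_ite (· ^ p), Real.zero_rpow hp]
  rw [← sum_filter, Icc_one_filter_le hL, sum_const, Nat.card_Icc, nsmul_eq_mul,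
    Nat.add_sub_cancel]

lemma exists_nonneg_sum_ite_le_of_antitoneOn {n : ℕ} {y : ℕ → ℝ}
    (hy : AntitoneOn y (Set.Icc 1 n)) (hyn : 0 ≤ y n) :
    ∃ c : ℕ → ℝ, (∀ L ∈ Icc 1 n, 0 ≤ c L) ∧
      ∀ i ∈ Icc 1 n, y i = ∑ L ∈ Icc 1 n, if i ≤ L then c L else 0 := by
  set z : ℕ → ℝ := fun i => if i ≤ n then y i else 0
  refine ⟨fun L => z L - z (L + 1), fun L hL => ?_, fun i hi => ?_⟩
  · rw [mem_Icc] at hL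
    rcases hL.2.lt_or_eq with hlt | rfl
    · simp only [z, if_pos hL.2, if_pos (Nat.succ_le_of_lt hlt), sub_nonneg]
      exact hy ⟨hL.1, hL.2⟩ ⟨by omega, hlt⟩ (Nat.le_succ L)
    · simp [z, hyn]
  · rw [mem_Icc] at hi
    have hfilter : {L ∈ Icc 1 n | i ≤ L} = Icc i n := by
      ext L
      simp only [mem_filter, mem_Icc]
      omega
    rw [← sum_filter, hfilter]
    calc y i = -(z (n + 1) - z i) := by simp [z, hi.2]
      _ = _ := by rw [← sum_Icc_sub hi.2, ← sum_neg_distrib]; simp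

lemma Real.Lp_sum_le_sum_Lp_of_nonneg {ι κ : Type*} (s : Finset ι) (t : Finset κ) {p : ℝ}
    (hp : 1 ≤ p) {f : κ → ι → ℝ} (hf : ∀ k ∈ t, ∀ i ∈ s, 0 ≤ f k i) :
    (∑ i ∈ s, (∑ k ∈ t, f k i) ^ p) ^ (1 / p) ≤ ∑ k ∈ t, (∑ i ∈ s, f k i ^ p) ^ (1 / p) := by
  classical
  induction t using Finset.induction_on with
  | empty =>
    simp [Real.zero_rpow (by positivity : p ≠ 0), Real.zero_rpow (by positivity : p⁻¹ ≠ 0)]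
  | insert k t hk ih =>
    have hft : ∀ j ∈ t, ∀ i ∈ s, 0 ≤ f j i := fun j hj => hf j (mem_insert_of_mem hj)
    simp_rw [sum_insert hk]
    calc _ ≤ (∑ i ∈ s, f k i ^ p) ^ (1 / p) + (∑ i ∈ s, (∑ j ∈ t, f j i) ^ p) ^ (1 / p) :=
          Real.Lp_add_le_of_nonneg s hp (hf k (mem_insert_self k t))
            fun i hi => sum_nonneg fun j hj => hft j hj i hi
      _ ≤ _ := add_le_add_right (ih hft) _

lemma rpow_sum_sum_ite_le_sum_mul_rpow {n : ℕ} {p : ℝ} (hp : 1 ≤ p) {c : ℕ → ℝ}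
    (hc : ∀ L ∈ Icc 1 n, 0 ≤ c L) :
    (∑ i ∈ Icc 1 n, (∑ L ∈ Icc 1 n, if i ≤ L then c L else 0) ^ p) ^ (1 / p)
      ≤ ∑ L ∈ Icc 1 n, c L * (L : ℝ) ^ (1 / p) := by
  have hp0 : p ≠ 0 := by positivity
  calc _ ≤ ∑ L ∈ Icc 1 n, (∑ i ∈ Icc 1 n, (if i ≤ L then c L else 0) ^ p) ^ (1 / p) :=
        Real.Lp_sum_le_sum_Lp_of_nonneg _ _ hp fun L hL i _ => by split_ifs <;> simp [hc L hL]
    _ = ∑ L ∈ Icc 1 n, c L * (L : ℝ) ^ (1 / p) := by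
        refine sum_congr rfl fun L hL => ?_
        rw [sum_Icc_rpow_ite_le hp0 (c L) (mem_Icc.mp hL).2,
          Real.mul_rpow (Nat.cast_nonneg L) (Real.rpow_nonneg (hc L hL) p), one_div,
          Real.rpow_rpow_inv (hc L hL) hp0, mul_comm]

lemma le_mul_rpow_of_mul_rpow_neg_le {a x p M : ℝ} (hx : 0 < x) (h : a * x ^ (-p) ≤ M) :
    a ≤ M * x ^ p := by
  rwa [Real.rpow_neg hx.le, ← div_eq_mul_inv, div_le_iff₀ (Real.rpow_pos_of_pos hx p)] at h

lemma sum_rpow_le_of_antitoneOn {n : ℕ} {p M : ℝ} (hp : 1 ≤ p) (hM : 0 ≤ M) {h y : ℕ → ℝ}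
    (hH : ∀ L ∈ Icc 1 n, 0 ≤ ∑ i ∈ Icc 1 L, h i)
    (hHM : ∀ L ∈ Icc 1 n, (L : ℝ) ≤ M * (∑ i ∈ Icc 1 L, h i) ^ p)
    (hy : AntitoneOn y (Set.Icc 1 n)) (hyn : 0 ≤ y n) :
    ∑ i ∈ Icc 1 n, y i ^ p ≤ M * (∑ i ∈ Icc 1 n, h i * y i) ^ p := by
  have hp0 : p ≠ 0 := by positivity
  obtain ⟨c, hc, hyc⟩ := exists_nonneg_sum_ite_le_of_antitoneOn hy hyn
  have hy0 : 0 ≤ ∑ i ∈ Icc 1 n, y i ^ p := sum_nonneg fun i hi => by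
    obtain ⟨h1, hin⟩ := mem_Icc.mp hi
    exact Real.rpow_nonneg (hyn.trans (hy ⟨h1, hin⟩ ⟨h1.trans hin, le_rfl⟩ hin)) p
  have hv : ∑ i ∈ Icc 1 n, h i * y i = ∑ L ∈ Icc 1 n, c L * ∑ i ∈ Icc 1 L, h i := by
    rw [sum_congr rfl fun i hi => by rw [hyc i hi, mul_sum], sum_comm]
    exact sum_congr rfl fun L hL => sum_Icc_mul_ite_le h (c L) (mem_Icc.mp hL).2
  have hv0 : 0 ≤ ∑ i ∈ Icc 1 n, h i * y i :=
    hv ▸ sum_nonneg fun L hL => mul_nonneg (hc L hL) (hH L hL)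
  have hnorm :
      (∑ i ∈ Icc 1 n, y i ^ p) ^ (1 / p) ≤ ∑ L ∈ Icc 1 n, c L * (L : ℝ) ^ (1 / p) := by
    rw [sum_congr rfl fun i hi => by rw [hyc i hi]]
    exact rpow_sum_sum_ite_le_sum_mul_rpow hp hc
  have hsteps : ∑ L ∈ Icc 1 n, c L * (L : ℝ) ^ (1 / p)
      ≤ M ^ (1 / p) * ∑ i ∈ Icc 1 n, h i * y i := by
    rw [hv, mul_sum]
    refine sum_le_sum fun L hL => ?_
    calc c L * (L : ℝ) ^ (1 / p)
        ≤ c L * (M * (∑ i ∈ Icc 1 L, h i) ^ p) ^ (1 / p) :=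
          mul_le_mul_of_nonneg_left (Real.rpow_le_rpow (Nat.cast_nonneg L) (hHM L hL)
            (by positivity)) (hc L hL)
      _ = M ^ (1 / p) * (c L * ∑ i ∈ Icc 1 L, h i) := by
          rw [Real.mul_rpow hM (Real.rpow_nonneg (hH L hL) p), one_div,
            Real.rpow_rpow_inv (hH L hL) hp0]
          ring
  calc ∑ i ∈ Icc 1 n, y i ^ p = ((∑ i ∈ Icc 1 n, y i ^ p) ^ (1 / p)) ^ p := by
        rw [one_div, Real.rpow_inv_rpow hy0 hp0]
    _ ≤ (M ^ (1 / p) * ∑ i ∈ Icc 1 n, h i * y i) ^ p :=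
        Real.rpow_le_rpow (Real.rpow_nonneg hy0 _) (hnorm.trans hsteps) (by positivity)
    _ = M * (∑ i ∈ Icc 1 n, h i * y i) ^ p := by
        rw [Real.mul_rpow (by positivity) hv0, one_div, Real.rpow_inv_rpow hM hp0]

lemma lossW_pos {W : ℝ → ℝ} (hW : StrictMonoOn W (Set.Icc 0 1)) {N i : ℕ} (hi : 1 ≤ i)
    (hiN : i ≤ N) : 0 < lossW W N i := by
  have hN : (0 : ℝ) < N := Nat.cast_pos.mpr (by omega)
  have hi' : (1 : ℝ) ≤ i := by exact_mod_cast hi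
  have hiN' : (i : ℝ) ≤ N := by exact_mod_cast hiN
  refine sub_pos.mpr (hW ⟨div_nonneg (by linarith) hN.le, (div_le_one hN).mpr (by linarith)⟩
    ⟨by positivity, (div_le_one hN).mpr hiN'⟩ (div_lt_div_of_pos_right (by linarith) hN))

lemma LossFeasible.antitoneOn {W : ℝ → ℝ} {N n : ℕ} {v : ℝ} {y : ℕ → ℝ}
    (hy : LossFeasible W N n v y) : AntitoneOn y (Set.Icc 1 n) :=
  antitoneOn_of_succ_le Set.ordConnected_Icc fun i _ hi hi' =>
    hy.2.1 i (mem_Icc.mpr ⟨hi.1, by rw [Order.succ_eq_add_one, Set.mem_Icc] at hi'; omega⟩)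

lemma lossFeasible_ite_le {W : ℝ → ℝ} {N n L : ℕ} {v : ℝ} (hL : L ≤ n)
    (hH : 0 < ∑ i ∈ Icc 1 L, lossW W N i) (hv : 0 ≤ v) :
    LossFeasible W N n v fun i => if i ≤ L then v / ∑ j ∈ Icc 1 L, lossW W N j else 0 := by
  refine ⟨?_, fun i _ => ?_, ?_⟩
  · dsimp only
    split_ifs <;> positivity
  · dsimp only
    split_ifs <;> first | exact le_rfl | positivity | omega
  · rw [sum_Icc_mul_ite_le _ _ hL]
    field_simp

/-- the optimal value (minimum) of the loss subproblem equals
`−(v/λ)^{1/β} · max_{L ∈ {1,…,n}} L·(∑_{i≤L} h⁻_i)^{−1/β}`. -/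
theorem loss_subproblem_optimal_value (W : ℝ → ℝ) (N n : ℕ) (β lam v : ℝ)
    (hW : IsPWF W) (hn1 : 1 ≤ n) (hnN : n ≤ N)
    (hβ0 : 0 < β) (hβ1 : β < 1) (hlam : 0 < lam) (hv : 0 ≤ v) :
    IsLeast {S : ℝ | ∃ y : ℕ → ℝ, LossFeasible W N n v y ∧
        S = -∑ i ∈ Finset.Icc 1 n, (y i / lam) ^ (1 / β)}
      (-(v / lam) ^ (1 / β) *
        (Finset.Icc 1 n).sup' (Finset.nonempty_Icc.mpr hn1)
          (fun L => (L : ℝ) * (∑ i ∈ Finset.Icc 1 L, lossW W N i) ^ (-(1 / β)))) := by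
  set p := 1 / β
  have hp : 1 ≤ p := by rw [one_le_div hβ0]; exact hβ1.le
  set H : ℕ → ℝ := fun L => ∑ i ∈ Icc 1 L, lossW W N i
  have hH : ∀ L ∈ Icc 1 n, 0 < H L := fun L hL =>
    sum_pos (fun i hi => lossW_pos hW.1.1 (mem_Icc.mp hi).1
        ((mem_Icc.mp hi).2.trans ((mem_Icc.mp hL).2.trans hnN)))
      (nonempty_Icc.mpr (mem_Icc.mp hL).1)
  set M := (Icc 1 n).sup' (nonempty_Icc.mpr hn1) fun L => (L : ℝ) * H L ^ (-p)
  obtain ⟨L₀, hL₀, hML₀⟩ : ∃ L₀ ∈ Icc 1 n, M = L₀ * H L₀ ^ (-p) :=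
    exists_mem_eq_sup' (nonempty_Icc.mpr hn1) _
  refine ⟨⟨_, lossFeasible_ite_le (mem_Icc.mp hL₀).2 (hH L₀ hL₀) hv, ?_⟩, ?_⟩
  · simp_rw [ite_div, zero_div]
    rw [show ∑ j ∈ Icc 1 L₀, lossW W N j = H L₀ from rfl,
      sum_Icc_rpow_ite_le (by positivity) _ (mem_Icc.mp hL₀).2, hML₀, div_right_comm,
      Real.div_rpow (by positivity) (hH L₀ hL₀).le, Real.rpow_neg (hH L₀ hL₀).le]
    ring
  · rintro S ⟨y, hy, rfl⟩
    have hM : 0 ≤ M := hML₀ ▸ mul_nonneg L₀.cast_nonneg (Real.rpow_nonneg (hH L₀ hL₀).le _)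
    have key := sum_rpow_le_of_antitoneOn hp hM (fun L hL => (hH L hL).le)
      (fun L hL => le_mul_rpow_of_mul_rpow_neg_le (hH L hL)
        (le_sup' (fun L : ℕ => (L : ℝ) * H L ^ (-p)) hL))
      (y := fun i => y i / lam)
      (fun a ha b hb hab => div_le_div_of_nonneg_right (hy.antitoneOn ha hb hab) hlam.le)
      (div_nonneg hy.1 hlam.le)
    simp_rw [mul_div_assoc'] at key
    rw [← sum_div, hy.2.2] at key
    linarith
end
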